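/- arXiv:1802.01973 — 3 statements merged into one kernel-verified Lean document; each statement's English description precedes it below -/
import Mathlib

section
/- Let W ∈ L(H) be a positive operator, S ⊆ H a closed subspace, and T the shorted operator of W to S. Then the following conditions are equivalent: (i) T ⁻≤ W (minus order); (ii) the pair (W, ker T) is compatible; (iii) H = ker T + ker(W − T); (iv) range T ⊆ range W. -/
open ContinuousLinearMap
open scoped ComplexInnerProductSpace

noncomputable section

variable {H : Type*} [NormedAddCommGroup H] [InnerProductSpace ℂ H] [CompleteSpace H]

/-- `M(W,S)`: the set of operators `X` with `0 ≤ X ≤ W` (Loewner order) and `range X ⊆ S^⊥`. -/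
def MSet (W : H →L[ℂ] H) (S : Submodule ℂ H) : Set (H →L[ℂ] H) :=
  {X | X.IsPositive ∧ (W - X).IsPositive ∧ LinearMap.range (X : H →ₗ[ℂ] H) ≤ Sᗮ}

/-- `T` is the shorted operator of `W` to `S`, i.e. the maximum of `M(W,S)` in the Loewner
order. -/
def IsShorted (W : H →L[ℂ] H) (S : Submodule ℂ H) (T : H →L[ℂ] H) : Prop :=
  T ∈ MSet W S ∧ ∀ X ∈ MSet W S, (T - X).IsPositive

/-- The minus order: `A ⁻≤ B` iff there are bounded idempotents `P, Q` with `A = PB` and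
`A* = QB*`. -/
def MinusLE (A B : H →L[ℂ] H) : Prop :=
  ∃ P Q : H →L[ℂ] H, IsIdempotentElem P ∧ IsIdempotentElem Q ∧
    A = P ∘L B ∧ adjoint A = Q ∘L adjoint B

/-- The pair `(W, N)` is compatible: there is a bounded idempotent `Q` with range `N` such that
`WQ` is selfadjoint. -/
def Compatible (W : H →L[ℂ] H) (N : Submodule ℂ H) : Prop :=
  ∃ Q : H →L[ℂ] H, IsIdempotentElem Q ∧ LinearMap.range (Q : H →ₗ[ℂ] H) = N ∧ IsSelfAdjoint (W ∘L Q)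

/-- `M⁻(W,S)`: operators `X` with `X ⁻≤ W`, `range X ⊆ S^⊥` and `range X* ⊆ S^⊥`. -/
def MMinusSet (W : H →L[ℂ] H) (S : Submodule ℂ H) : Set (H →L[ℂ] H) :=
  {X | MinusLE X W ∧ LinearMap.range (X : H →ₗ[ℂ] H) ≤ Sᗮ ∧ LinearMap.range ((adjoint X : H →L[ℂ] H) : H →ₗ[ℂ] H) ≤ Sᗮ}

/-- `X₀` is a `W`-inverse of `M` in `R(C)`: for every `x`, `X₀ x` is a `W`-weighted least squares
solution of `M z = C x`. -/
def WInverseIn (W M C X₀ : H →L[ℂ] H) : Prop :=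
  ∀ x z : H, (⟪W (M (X₀ x) - C x), M (X₀ x) - C x⟫).re ≤ (⟪W (M z - C x), M z - C x⟫).re

/-- The left weighted star order `A ₋*_W≤ B`. -/
def LStarW (W A B : H →L[ℂ] H) : Prop :=
  LinearMap.range (B : H →ₗ[ℂ] H) = LinearMap.range (A : H →ₗ[ℂ] H) ⊔ LinearMap.range ((B - A : H →L[ℂ] H) : H →ₗ[ℂ] H) ∧
  LinearMap.range (A : H →ₗ[ℂ] H) ⊓ LinearMap.range ((B - A : H →L[ℂ] H) : H →ₗ[ℂ] H) = ⊥ ∧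
  LinearMap.range ((B - A : H →L[ℂ] H) : H →ₗ[ℂ] H) ≤ LinearMap.ker ((adjoint A ∘L W : H →L[ℂ] H) : H →ₗ[ℂ] H)

/-- The right weighted star order `A ≤*_W B`. -/
def RStarW (W A B : H →L[ℂ] H) : Prop :=
  LinearMap.range ((adjoint B : H →L[ℂ] H) : H →ₗ[ℂ] H) =
    LinearMap.range ((adjoint A : H →L[ℂ] H) : H →ₗ[ℂ] H) ⊔ LinearMap.range ((adjoint B - adjoint A : H →L[ℂ] H) : H →ₗ[ℂ] H) ∧
  LinearMap.range ((adjoint A : H →L[ℂ] H) : H →ₗ[ℂ] H) ⊓ LinearMap.range ((adjoint B - adjoint A : H →L[ℂ] H) : H →ₗ[ℂ] H) = ⊥ ∧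
  LinearMap.range ((adjoint B - adjoint A : H →L[ℂ] H) : H →ₗ[ℂ] H) ≤ LinearMap.ker ((A ∘L W : H →L[ℂ] H) : H →ₗ[ℂ] H)

/-- The weighted star order `A *_W≤ B`. -/
def StarW (W A B : H →L[ℂ] H) : Prop :=
  LStarW W A B ∧ RStarW W A B

/-!
Write `W = A* A` and let `P` be the orthogonal projection onto `(A S)ᗮ`. Every `X ∈ M(W,S)`
kills `S`, so `⟪X x, x⟫ = ⟪X (x - s), x - s⟫ ≤ ‖A x - A s‖²` for `s ∈ S`; passing to the closure
of `A S` gives `⟪X x, x⟫ ≤ ‖P A x‖² = ⟪A* P A x, x⟫`, and `A* P A` itself lies in `M(W,S)`.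
Hence `T = A* P A` and `W - T = A* (1 - P) A`. As `P A x` and `(1 - P) A y` are orthogonal vectors
in the closure of the range of `A`, on whose orthocomplement `A*` vanishes, the ranges of `T` and
`W - T` meet only in `0`. This gives (iv) ⇒ (iii): if `T x = W y`, then `(W - T) y = T (x - y)`
lies in both ranges.

For (iii) ⇒ (ii), project onto `ker T` along a complement chosen inside `ker (W - T)`; the
two subspaces are `W`-orthogonal, which makes `W Q` selfadjoint. For (ii) ⇒ (i), `W (1 - Q)`
lies in `M(W,S)` and dominates `T`, so `T = W (1 - Q) = (1 - Q)* W`. Finally (i) ⇒ (iv)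
because `A* = Q B*` means `A = B Q*`.
-/

lemma MinusLE.range_le {A B : H →L[ℂ] H} (h : MinusLE A B) :
    LinearMap.range (A : H →ₗ[ℂ] H) ≤ LinearMap.range (B : H →ₗ[ℂ] H) := by
  obtain ⟨-, Q, -, -, -, hA⟩ := h
  have hA' : A = B ∘L adjoint Q := by
    simpa only [adjoint_adjoint, adjoint_comp] using congrArg adjoint hA
  rintro _ ⟨x, rfl⟩
  exact ⟨adjoint Q x, by rw [hA']; rfl⟩

lemma minusLE_of_eq_comp {A B R : H →L[ℂ] H} (hA : IsSelfAdjoint A) (hB : IsSelfAdjoint B)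
    (hR : IsIdempotentElem R) (h : A = B ∘L R) : MinusLE A B := by
  have hA' : A = star R ∘L B := by
    rw [← hA.star_eq, h, ← mul_def, star_mul, hB.star_eq, mul_def]
  refine ⟨star R, star R, hR.star, hR.star, hA', ?_⟩
  rw [← star_eq_adjoint, ← star_eq_adjoint, hA.star_eq, hB.star_eq]
  exact hA'

lemma ContinuousLinearMap.IsPositive.exists_eq_star_mul_self {T : H →L[ℂ] H}
    (hT : T.IsPositive) : ∃ A : H →L[ℂ] H, T = star A * A :=
  CStarAlgebra.nonneg_iff_eq_star_mul_self.mp ((nonneg_iff_isPositive T).2 hT)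

lemma ContinuousLinearMap.IsPositive.apply_eq_zero_of_inner_eq_zero {T : H →L[ℂ] H}
    (hT : T.IsPositive) {x : H} (h : ⟪T x, x⟫ = 0) : T x = 0 := by
  obtain ⟨A, rfl⟩ := hT.exists_eq_star_mul_self
  have hAx : A x = 0 := by
    rw [← inner_self_eq_zero (𝕜 := ℂ), ← adjoint_inner_left, ← star_eq_adjoint]
    exact h
  simp [hAx]

lemma ContinuousLinearMap.IsPositive.le_ker_of_range_le_orthogonal {T : H →L[ℂ] H}
    {S : Submodule ℂ H} (hT : T.IsPositive)
    (hTS : LinearMap.range (T : H →ₗ[ℂ] H) ≤ Sᗮ) :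
    S ≤ LinearMap.ker (T : H →ₗ[ℂ] H) := fun s hs =>
  hT.apply_eq_zero_of_inner_eq_zero <|
    inner_eq_zero_symm.mp (Submodule.inner_right_of_mem_orthogonal hs (hTS ⟨s, rfl⟩))

lemma ContinuousLinearMap.IsPositive.star_mul_mul {W : H →L[ℂ] H} (hW : W.IsPositive)
    (R : H →L[ℂ] H) : (star R * W * R).IsPositive := by
  rw [star_eq_adjoint, mul_assoc]
  exact hW.adjoint_conj R

lemma MSet.le_ker {W X : H →L[ℂ] H} {S : Submodule ℂ H} (hX : X ∈ MSet W S) :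
    S ≤ LinearMap.ker (X : H →ₗ[ℂ] H) :=
  hX.1.le_ker_of_range_le_orthogonal hX.2.2

section CompatibleProjection

variable {W Q : H →L[ℂ] H}

lemma star_mul_eq_mul_of_isSelfAdjoint_comp (hW : IsSelfAdjoint W)
    (hWQ : IsSelfAdjoint (W ∘L Q)) : star Q * W = W * Q := by
  have h := hWQ.star_eq
  rwa [← mul_def, star_mul, hW.star_eq] at h

lemma star_mul_mul_one_sub_of_isSelfAdjoint_comp (hW : IsSelfAdjoint W) (hQ : IsIdempotentElem Q)
    (hWQ : IsSelfAdjoint (W ∘L Q)) : star Q * W * (1 - Q) = 0 := by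
  rw [star_mul_eq_mul_of_isSelfAdjoint_comp hW hWQ, mul_assoc, hQ.mul_one_sub_self, mul_zero]

lemma star_one_sub_mul_mul_one_sub (hW : IsSelfAdjoint W) (hQ : IsIdempotentElem Q)
    (hWQ : IsSelfAdjoint (W ∘L Q)) : star (1 - Q) * W * (1 - Q) = W * (1 - Q) := by
  rw [star_sub, star_one, sub_mul, one_mul, sub_mul,
    star_mul_mul_one_sub_of_isSelfAdjoint_comp hW hQ hWQ, sub_zero]

lemma comp_one_sub_mem_MSet {S : Submodule ℂ H} (hW : W.IsPositive) (hQ : IsIdempotentElem Q)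
    (hWQ : IsSelfAdjoint (W ∘L Q)) (hSQ : S ≤ LinearMap.range (Q : H →ₗ[ℂ] H)) :
    W * (1 - Q) ∈ MSet W S := by
  refine ⟨?_, ?_, ?_⟩
  · simpa only [star_one_sub_mul_mul_one_sub hW.isSelfAdjoint hQ hWQ] using
      hW.star_mul_mul (1 - Q)
  · have h : star Q * W * Q = W - W * (1 - Q) := by
      rw [star_mul_eq_mul_of_isSelfAdjoint_comp hW.isSelfAdjoint hWQ, mul_assoc, hQ.eq, mul_sub,
        mul_one, sub_sub_cancel]
    simpa only [h] using hW.star_mul_mul Q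
  · rintro _ ⟨x, rfl⟩
    refine (Submodule.mem_orthogonal _ _).2 fun s hs => ?_
    obtain ⟨u, rfl⟩ := hSQ hs
    change ⟪Q u, (W * (1 - Q)) x⟫ = 0
    rw [← adjoint_inner_right, ← star_eq_adjoint]
    change ⟪u, (star Q * W * (1 - Q)) x⟫ = 0
    rw [star_mul_mul_one_sub_of_isSelfAdjoint_comp hW.isSelfAdjoint hQ hWQ, zero_apply,
      inner_zero_right]

lemma IsShorted.eq_comp_one_sub {T : H →L[ℂ] H} {S : Submodule ℂ H} (hW : W.IsPositive)
    (hT : IsShorted W S T) (hQ : IsIdempotentElem Q)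
    (hQT : LinearMap.range (Q : H →ₗ[ℂ] H) = LinearMap.ker (T : H →ₗ[ℂ] H))
    (hWQ : IsSelfAdjoint (W ∘L Q)) : T = W * (1 - Q) := by
  have hTQ : T * Q = 0 := by
    ext x
    have hx : Q x ∈ LinearMap.ker (T : H →ₗ[ℂ] H) := hQT ▸ LinearMap.mem_range_self _ x
    exact hx
  have hT' : star (1 - Q) * T * (1 - Q) = T := by
    have hTQ' : IsSelfAdjoint (T ∘L Q) := by rw [← mul_def, hTQ]; exact .zero _
    rw [star_one_sub_mul_mul_one_sub hT.1.1.isSelfAdjoint hQ hTQ', mul_sub, mul_one, hTQ,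
      sub_zero]
  have hX := comp_one_sub_mem_MSet hW hQ hWQ ((MSet.le_ker hT.1).trans hQT.ge)
  refine le_antisymm ?_ ((le_def _ _).2 (hT.2 _ hX))
  have h : star (1 - Q) * (W - T) * (1 - Q) = W * (1 - Q) - T := by
    rw [mul_sub (star (1 - Q)), sub_mul, hT', star_one_sub_mul_mul_one_sub hW.isSelfAdjoint hQ hWQ]
  exact (le_def _ _).2 (h ▸ hT.1.2.1.star_mul_mul (1 - Q))

end CompatibleProjection

lemma Submodule.isCompl_inf_orthogonal_inf {𝕜 E : Type*} [RCLike 𝕜] [NormedAddCommGroup E]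
    [InnerProductSpace 𝕜 E] {N K : Submodule 𝕜 E} [(N ⊓ K).HasOrthogonalProjection]
    (h : N ⊔ K = ⊤) : IsCompl N (K ⊓ (N ⊓ K)ᗮ) := by
  constructor
  · rw [Submodule.disjoint_def]
    rintro x hxN ⟨hxK, hx⟩
    exact (Submodule.mem_bot 𝕜).1 <|
      (N ⊓ K).inf_orthogonal_eq_bot ▸ Submodule.mem_inf.2 ⟨⟨hxN, hxK⟩, hx⟩
  · rw [codisjoint_iff, eq_top_iff]
    intro x _
    obtain ⟨n, hn, k, hk, rfl⟩ := Submodule.mem_sup.1 (h ▸ Submodule.mem_top : x ∈ N ⊔ K)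
    set p := (N ⊓ K).starProjection k
    have hp : p ∈ N ⊓ K := (N ⊓ K).starProjection_apply_mem k
    refine Submodule.mem_sup.2 ⟨n + p, add_mem hn hp.1, k - p,
      ⟨sub_mem hk hp.2, (N ⊓ K).sub_starProjection_mem_orthogonal k⟩, by abel⟩

lemma compatible_of_isTopCompl {W : H →L[ℂ] H} {N K : Submodule ℂ H} (hW : IsSelfAdjoint W)
    (h : N.IsTopCompl K) (hWNK : ∀ n ∈ N, ∀ k ∈ K, ⟪W n, k⟫ = 0) : Compatible W N := by
  set Q := N.projectionL K h
  have hQK : ∀ x, x - Q x ∈ K := fun x =>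
    Submodule.projectionL_eq_self_sub_projectionL h x ▸ Submodule.projectionL_apply_mem h.symm x
  have hQN : ∀ x, Q x ∈ N := Submodule.projectionL_apply_mem h
  refine ⟨Q, Submodule.isIdempotentElem_projectionL h, Submodule.range_projectionL h, ?_⟩
  rw [isSelfAdjoint_iff_isSymmetric]
  intro x y
  change ⟪W (Q x), y⟫ = ⟪x, W (Q y)⟫
  calc ⟪W (Q x), y⟫ = ⟪W (Q x), Q y + (y - Q y)⟫ := by rw [add_sub_cancel]
    _ = ⟪Q x, W (Q y)⟫ := by
      rw [inner_add_right, hWNK _ (hQN x) _ (hQK y), add_zero]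
      exact hW.isSymmetric _ _
    _ = ⟪Q x + (x - Q x), W (Q y)⟫ := by
      rw [inner_add_left, inner_eq_zero_symm.1 (hWNK _ (hQN y) _ (hQK x)), add_zero]
    _ = ⟪x, W (Q y)⟫ := by rw [add_sub_cancel]

lemma compatible_of_sup_eq_top {W : H →L[ℂ] H} {N K : Submodule ℂ H} (hW : IsSelfAdjoint W)
    (hN : IsClosed (N : Set H)) (hK : IsClosed (K : Set H)) (hNK : N ⊔ K = ⊤)
    (hWNK : ∀ n ∈ N, ∀ k ∈ K, ⟪W n, k⟫ = 0) : Compatible W N := by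
  have : CompleteSpace ↥(N ⊓ K) := (hN.inter hK).completeSpace_coe
  have h : N.IsTopCompl (K ⊓ (N ⊓ K)ᗮ) :=
    Submodule.IsCompl.isTopCompl_of_isClosed (Submodule.isCompl_inf_orthogonal_inf hNK) hN
      (hK.inter (N ⊓ K).isClosed_orthogonal)
  exact compatible_of_isTopCompl hW h fun n hn k hk => hWNK n hn k hk.1

lemma inner_apply_eq_zero_of_mem_ker {W T : H →L[ℂ] H} (hW : IsSelfAdjoint W)
    (hT : IsSelfAdjoint T) {n k : H} (hn : n ∈ LinearMap.ker (T : H →ₗ[ℂ] H))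
    (hk : k ∈ LinearMap.ker ((W - T : H →L[ℂ] H) : H →ₗ[ℂ] H)) : ⟪W n, k⟫ = 0 := by
  have hWk : W k = T k := sub_eq_zero.1 hk
  calc ⟪W n, k⟫ = ⟪n, T k⟫ := by rw [← hWk]; exact hW.isSymmetric n k
    _ = ⟪T n, k⟫ := (hT.isSymmetric n k).symm
    _ = 0 := by rw [show T n = 0 from hn, inner_zero_left]

section ShortedOfFactor

variable {A X : H →L[ℂ] H} {S : Submodule ℂ H}

def shortedOfFactor (A : H →L[ℂ] H) (S : Submodule ℂ H) : H →L[ℂ] H :=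
  star A * (S.map (A : H →ₗ[ℂ] H))ᗮ.starProjection * A

lemma sub_shortedOfFactor :
    star A * A - shortedOfFactor A S =
      star A * (S.map (A : H →ₗ[ℂ] H))ᗮᗮ.starProjection * A := by
  rw [shortedOfFactor, (S.map (A : H →ₗ[ℂ] H))ᗮ.starProjection_orthogonal', mul_sub,
    sub_mul, mul_one]

lemma shortedOfFactor_mem_MSet : shortedOfFactor A S ∈ MSet (star A * A) S := by
  have hP (U : Submodule ℂ H) [U.HasOrthogonalProjection] :
      (star A * U.starProjection * A).IsPositive :=
    (IsPositive.of_isStarProjection isStarProjection_starProjection).star_mul_mul A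
  refine ⟨hP _, ?_, ?_⟩
  · rw [sub_shortedOfFactor]
    exact hP _
  · rintro _ ⟨x, rfl⟩
    refine (Submodule.mem_orthogonal _ _).2 fun s hs => ?_
    change ⟪s, adjoint A ((S.map (A : H →ₗ[ℂ] H))ᗮ.starProjection (A x))⟫ = 0
    rw [adjoint_inner_right]
    exact Submodule.inner_right_of_mem_orthogonal (Submodule.mem_map_of_mem hs)
      (Submodule.starProjection_apply_mem _ _)

lemma MSet.reApplyInnerSelf_le (hX : X ∈ MSet (star A * A) S) (x : H) {s : H} (hs : s ∈ S) :
    X.reApplyInnerSelf x ≤ ‖A x - A s‖ ^ 2 := by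
  have hXs : X s = 0 := MSet.le_ker hX hs
  have hsX : ⟪X x, s⟫ = 0 := (hX.1.isSymmetric x s).trans (by simp [hXs])
  have hxs : ⟪X (x - s), x - s⟫ = ⟪X x, x⟫ := by
    rw [map_sub, hXs, sub_zero, inner_sub_right, hsX, sub_zero]
  have h := hX.2.1.re_inner_nonneg_left (x - s)
  rw [sub_apply, inner_sub_left, map_sub, hxs, sub_nonneg] at h
  rw [← map_sub, apply_norm_sq_eq_inner_adjoint_left, reApplyInnerSelf_apply]
  exact h

lemma reApplyInnerSelf_shortedOfFactor (x : H) :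
    (shortedOfFactor A S).reApplyInnerSelf x =
      ‖(S.map (A : H →ₗ[ℂ] H))ᗮ.starProjection (A x)‖ ^ 2 := by
  rw [reApplyInnerSelf_apply]
  change RCLike.re ⟪adjoint A ((S.map (A : H →ₗ[ℂ] H))ᗮ.starProjection (A x)), x⟫ = _
  rw [adjoint_inner_left, Submodule.re_inner_starProjection_eq_normSq]
  rfl

lemma MSet.le_shortedOfFactor (hX : X ∈ MSet (star A * A) S) : X ≤ shortedOfFactor A S := by
  set K := S.map (A : H →ₗ[ℂ] H)
  rw [le_def, isPositive_def']
  refine ⟨shortedOfFactor_mem_MSet.1.isSelfAdjoint.sub hX.1.isSelfAdjoint, fun x => ?_⟩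
  have hK : ∀ m ∈ Kᗮᗮ, X.reApplyInnerSelf x ≤ ‖A x - m‖ ^ 2 := by
    intro m hm
    rw [K.orthogonal_orthogonal_eq_closure, ← SetLike.mem_coe,
      Submodule.topologicalClosure_coe] at hm
    refine closure_minimal (t := {m | X.reApplyInnerSelf x ≤ ‖A x - m‖ ^ 2}) ?_
      (isClosed_le continuous_const (by fun_prop)) hm
    rintro _ ⟨s, hs, rfl⟩
    exact MSet.reApplyInnerSelf_le hX x hs
  have h := hK _ (Kᗮᗮ.starProjection_apply_mem (A x))
  rw [Submodule.starProjection_orthogonal_val, sub_sub_cancel,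
    ← reApplyInnerSelf_shortedOfFactor] at h
  rw [reApplyInnerSelf_apply, sub_apply, inner_sub_left, map_sub, sub_nonneg]
  exact h

lemma IsShorted.eq_shortedOfFactor {T : H →L[ℂ] H} (hT : IsShorted (star A * A) S T) :
    T = shortedOfFactor A S :=
  le_antisymm (MSet.le_shortedOfFactor hT.1) ((le_def _ _).2 (hT.2 _ shortedOfFactor_mem_MSet))

lemma range_shortedOfFactor_inf_range_sub_eq_bot :
    LinearMap.range (shortedOfFactor A S : H →ₗ[ℂ] H) ⊓
      LinearMap.range ((star A * A - shortedOfFactor A S : H →L[ℂ] H) : H →ₗ[ℂ] H) =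
        ⊥ := by
  set K := S.map (A : H →ₗ[ℂ] H)
  rw [sub_shortedOfFactor, eq_bot_iff]
  rintro _ ⟨⟨x, rfl⟩, ⟨y, hy⟩⟩
  set u := Kᗮ.starProjection (A x)
  set v := Kᗮᗮ.starProjection (A y)
  have huv : u - v ∈ (LinearMap.range (A : H →ₗ[ℂ] H))ᗮ := by
    rw [orthogonal_range, LinearMap.mem_ker, map_sub, sub_eq_zero]
    exact hy.symm
  have hK : Kᗮᗮ ≤ (LinearMap.range (A : H →ₗ[ℂ] H))ᗮᗮ :=
    Submodule.orthogonal_le (Submodule.orthogonal_le LinearMap.map_le_range)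
  have huv' : u - v ∈ (LinearMap.range (A : H →ₗ[ℂ] H))ᗮᗮ := by
    rw [show u = A x - Kᗮᗮ.starProjection (A x) by
      rw [Submodule.starProjection_orthogonal_val, sub_sub_cancel]]
    exact sub_mem (sub_mem (Submodule.le_orthogonal_orthogonal _ ⟨x, rfl⟩)
      (hK (Kᗮᗮ.starProjection_apply_mem _))) (hK (Kᗮᗮ.starProjection_apply_mem _))
  have hu : u = 0 := by
    have huv0 : u - v = 0 := by
      simpa using (Submodule.inf_orthogonal_eq_bot _).le ⟨huv, huv'⟩
    have hu' : u ∈ Kᗮ ⊓ Kᗮᗮ :=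
      ⟨Kᗮ.starProjection_apply_mem _,
        sub_eq_zero.1 huv0 ▸ Kᗮᗮ.starProjection_apply_mem _⟩
    simpa using (Submodule.inf_orthogonal_eq_bot _).le hu'
  show star A u = 0
  rw [hu, map_zero]

end ShortedOfFactor

lemma IsShorted.range_inf_range_sub_eq_bot {W T : H →L[ℂ] H} {S : Submodule ℂ H}
    (hW : W.IsPositive) (hT : IsShorted W S T) :
    LinearMap.range (T : H →ₗ[ℂ] H) ⊓
      LinearMap.range ((W - T : H →L[ℂ] H) : H →ₗ[ℂ] H) = ⊥ := by
  obtain ⟨A, rfl⟩ := hW.exists_eq_star_mul_self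
  rw [hT.eq_shortedOfFactor]
  exact range_shortedOfFactor_inf_range_sub_eq_bot

lemma LinearMap.sup_ker_sub_eq_top_of_range_le {R M : Type*} [Ring R] [AddCommGroup M]
    [Module R M] {T W : M →ₗ[R] M} (hTW : range T ⊓ range (W - T) = ⊥)
    (h : range T ≤ range W) : ker T ⊔ ker (W - T) = ⊤ := by
  refine eq_top_iff.2 fun x _ => ?_
  obtain ⟨y, hy⟩ := h ⟨x, rfl⟩
  have hWTy : (W - T) y = T (x - y) := by rw [sub_apply, map_sub, hy]
  have h0 : (W - T) y = 0 := by
    simpa using hTW.le ⟨hWTy ▸ ⟨x - y, rfl⟩, ⟨y, rfl⟩⟩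
  exact Submodule.mem_sup.2 ⟨x - y, by rw [mem_ker, ← hWTy, h0], y, h0, sub_add_cancel x y⟩

theorem stmt3_general (W T : H →L[ℂ] H) (S : Submodule ℂ H)
    (hW : W.IsPositive) (hT : IsShorted W S T) :
    [MinusLE T W,
     Compatible W (LinearMap.ker (T : H →ₗ[ℂ] H)),
     LinearMap.ker (T : H →ₗ[ℂ] H) ⊔ LinearMap.ker ((W - T : H →L[ℂ] H) : H →ₗ[ℂ] H) = ⊤,
     LinearMap.range (T : H →ₗ[ℂ] H) ≤ LinearMap.range (W : H →ₗ[ℂ] H)].TFAE := by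
  have hTsa : IsSelfAdjoint T := hT.1.1.isSelfAdjoint
  tfae_have 1 → 4 := MinusLE.range_le
  tfae_have 4 → 3 := LinearMap.sup_ker_sub_eq_top_of_range_le (hT.range_inf_range_sub_eq_bot hW)
  tfae_have 3 → 2 := fun h =>
    compatible_of_sup_eq_top hW.isSelfAdjoint T.isClosed_ker (W - T).isClosed_ker h
      fun _ hn _ hk => inner_apply_eq_zero_of_mem_ker hW.isSelfAdjoint hTsa hn hk
  tfae_have 2 → 1 := fun ⟨Q, hQ, hQT, hWQ⟩ =>
    minusLE_of_eq_comp hTsa hW.isSelfAdjoint hQ.one_sub (hT.eq_comp_one_sub hW hQ hQT hWQ)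
  tfae_finish

/-- equivalence of (i) `T ⁻≤ W`; (ii) `(W, ker T)` compatible;
(iii) `H = ker T + ker (W - T)`; (iv) `range T ⊆ range W`. -/
theorem stmt3 (W T : H →L[ℂ] H) (S : Submodule ℂ H) (hS : IsClosed (S : Set H))
    (hW : W.IsPositive) (hT : IsShorted W S T) :
    [MinusLE T W,
     Compatible W (LinearMap.ker (T : H →ₗ[ℂ] H)),
     LinearMap.ker (T : H →ₗ[ℂ] H) ⊔ LinearMap.ker ((W - T : H →L[ℂ] H) : H →ₗ[ℂ] H) = ⊤,
     LinearMap.range (T : H →ₗ[ℂ] H) ≤ LinearMap.range (W : H →ₗ[ℂ] H)].TFAE :=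
  stmt3_general W T S hW hT
end
end

section
/- Let W ∈ L(H) be a positive injective operator and A, B ∈ L(H) operators with closed range such that ker B = ker(A*W), and let T be the shorted operator of W to range A. If the pair (W, ker T) is compatible, then T is the infimum, with respect to the minus order, of the set {(AXB − I)*W(AXB − I) : X ∈ L(H)}: T ⁻≤ (AXB − I)*W(AXB − I) for every X ∈ L(H), and every D ∈ L(H) satisfying D ⁻≤ (AXB − I)*W(AXB − I) for all X ∈ L(H) satisfies D ⁻≤ T. -/
open ContinuousLinearMap
open scoped ComplexInnerProductSpace

noncomputable section

variable {H : Type*} [NormedAddCommGroup H] [InnerProductSpace ℂ H] [CompleteSpace H]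

/-!
Compatibility supplies an idempotent `Q` with range `ker T` and `W Q` selfadjoint, and then
`T = W (1 - Q)`: the operator `W (1 - Q) = (1 - Q)* W (1 - Q)` lies in `M(W, R(A))`, while
`W (1 - Q) - T = (1 - Q)* (W - T) (1 - Q) ≥ 0`. Since `A* T = 0`, the hypothesis
`ker B = ker (A* W)` gives `B (1 - Q) = 0`, so `(1 - Q)*` maps every `(AXB - I)* W (AXB - I)`
onto `T`.

Conversely, if `D` lies below all these operators, then `D` and `D*` vanish on `R(A)` (for `A y`
pick `X` with `X B A y = y`), and `X = 0` gives `D = P W`, `D* = P' W`. Maximality of `T`, tested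
against the rank-one operator `⟪W m, m⟫⁻¹ |W m⟩⟨W m| ≤ W - T` for `m ∈ ker T` with
`W m ⊥ R(A)`, together with injectivity of `W` yields `ker (A* W) ⊆ ker Q`. Hence `D Q = 0` and
`D = P W (1 - Q) = P T`, and likewise `D* = P' T`.
-/

open InnerProductSpace (rankOne)

lemma star_mul_eq_mul_of_isSelfAdjoint {R : Type*} [Mul R] [StarMul R] {W Q : R}
    (hW : IsSelfAdjoint W) (hWQ : IsSelfAdjoint (W * Q)) : star Q * W = W * Q := by
  simpa only [star_mul, hW.star_eq] using hWQ.star_eq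

lemma star_mul_conj_sub_one_eq {R : Type*} [Ring R] [StarRing R] {W P A B X : R}
    (hPW : star P * W = W * P) (hWPA : W * P * A = 0) (hBP : B * P = 0) :
    star P * (star (A * (X * B) - 1) * (W * (A * (X * B) - 1))) = W * P := by
  have hCP : star P * star (A * (X * B) - 1) = -star P := by
    rw [← star_mul, sub_mul, mul_assoc, mul_assoc, hBP]
    simp
  rw [← mul_assoc, hCP, neg_mul, ← mul_assoc, hPW, mul_sub, ← mul_assoc, hWPA]
  simp

section

variable {E : Type*} [NormedAddCommGroup E] [InnerProductSpace ℂ E]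

lemma exists_apply_eq_of_ne_zero {u : E} (hu : u ≠ 0) (y : E) : ∃ X : E →L[ℂ] E, X u = y :=
  ⟨(⟪u, u⟫⁻¹ : ℂ) • rankOne ℂ y u, by simp [smul_smul, hu]⟩

namespace ContinuousLinearMap.IsPositive

variable [CompleteSpace E] {R : E →L[ℂ] E}

lemma sqrt_mul_sqrt (hR : R.IsPositive) : CFC.sqrt R * CFC.sqrt R = R :=
  CFC.sqrt_mul_sqrt_self R ((nonneg_iff_isPositive R).mpr hR)

lemma inner_eq_inner_sqrt (hR : R.IsPositive) (x y : E) :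
    ⟪R x, y⟫ = ⟪CFC.sqrt R x, CFC.sqrt R y⟫ := by
  conv_lhs => rw [← hR.sqrt_mul_sqrt]
  exact (CFC.sqrt_nonneg R).isSelfAdjoint.isSymmetric _ _

lemma apply_eq_zero_of_inner_self_eq_zero (hR : R.IsPositive) {x : E} (hx : ⟪R x, x⟫ = 0) :
    R x = 0 := by
  rw [hR.inner_eq_inner_sqrt, inner_self_eq_zero] at hx
  rw [← hR.sqrt_mul_sqrt, mul_apply_eq_comp, hx, map_zero]

/- Cauchy–Schwarz for the semi-inner product `⟪R ·, ·⟫`, read off through `√R`. -/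
lemma rankOne_le_smul (hR : R.IsPositive) (m : E) :
    rankOne ℂ (R m) (R m) ≤ ⟪R m, m⟫ • R := by
  rw [le_def, isPositive_iff_complex]
  intro x
  set S := CFC.sqrt R
  have key : ⟪(⟪R m, m⟫ • R - rankOne ℂ (R m) (R m)) x, x⟫ =
      ((‖S m‖ ^ 2 * ‖S x‖ ^ 2 - ‖⟪S m, S x⟫‖ ^ 2 : ℝ) : ℂ) := by
    simp only [sub_apply, smul_apply, InnerProductSpace.rankOne_apply, inner_sub_left,
      inner_smul_left, hR.inner_eq_inner_sqrt, inner_self_eq_norm_sq_to_K, RCLike.conj_mul,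
      map_pow, RCLike.conj_ofReal]
    push_cast
    rfl
  rw [key]
  have := norm_inner_le_norm (𝕜 := ℂ) (S m) (S x)
  simp only [RCLike.re_to_complex, Complex.ofReal_re, true_and]
  nlinarith [norm_nonneg (⟪S m, S x⟫), mul_nonneg (norm_nonneg (S m)) (norm_nonneg (S x))]

end ContinuousLinearMap.IsPositive

namespace IsShorted

variable {W T Q : E →L[ℂ] E} {S : Submodule ℂ E}

lemma apply_eq_zero_of_mem (hT : IsShorted W S T) {s : E} (hs : s ∈ S) : T s = 0 := by
  have hTs : T (T s) ∈ Sᗮ := hT.1.2.2 ⟨T s, rfl⟩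
  rw [← inner_self_eq_zero (𝕜 := ℂ), hT.1.1.inner_left_eq_inner_right]
  exact Submodule.inner_right_of_mem_orthogonal hs hTs

lemma apply_eq_self_of_mem (hT : IsShorted W S T) (hQ : IsIdempotentElem Q)
    (hQT : LinearMap.range (Q : E →ₗ[ℂ] E) = LinearMap.ker (T : E →ₗ[ℂ] E)) {s : E}
    (hs : s ∈ S) : Q s = s := by
  obtain ⟨u, rfl⟩ : s ∈ LinearMap.range (Q : E →ₗ[ℂ] E) := hQT ▸ hT.apply_eq_zero_of_mem hs
  exact congrArg (· u) hQ.eq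

lemma eq_zero_of_le_sub {Y : E →L[ℂ] E} (hT : IsShorted W S T) (hY₀ : 0 ≤ Y) (hY : Y ≤ W - T)
    (hYS : LinearMap.range (Y : E →ₗ[ℂ] E) ≤ Sᗮ) : Y = 0 := by
  have hTY : T + Y ∈ MSet W S := by
    refine ⟨hT.1.1.add ((nonneg_iff_isPositive Y).mp hY₀), ?_, ?_⟩
    · rw [← sub_sub]
      exact hY
    · rw [toLinearMap_add]
      exact (LinearMap.range_add_le _ _).trans (sup_le hT.1.2.2 hYS)
  exact le_antisymm ((le_def Y 0).mpr (by simpa using hT.2 _ hTY)) hY₀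

variable [CompleteSpace E]

open scoped ComplexOrder in
lemma apply_eq_zero_of_apply_mem_orthogonal (hT : IsShorted W S T) {m : E}
    (hm : T m = 0) (hWm : W m ∈ Sᗮ) : W m = 0 := by
  set R := W - T
  have hR : R.IsPositive := hT.1.2.1
  have hRm : R m = W m := by simp [R, hm]
  rw [← hRm] at hWm ⊢
  by_contra hne
  set c := ⟪R m, m⟫
  have hc : c ≠ 0 := fun hc => hne (hR.apply_eq_zero_of_inner_self_eq_zero hc)
  have hc₀ : 0 ≤ c⁻¹ := inv_nonneg.mpr (hR.inner_nonneg_left m)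
  have hY : c⁻¹ • rankOne ℂ (R m) (R m) = 0 := by
    refine hT.eq_zero_of_le_sub ?_ ?_ ?_
    · exact (nonneg_iff_isPositive _).mpr
        ((InnerProductSpace.isPositive_rankOne_self _).smul_of_nonneg hc₀)
    · have hsub : R - c⁻¹ • rankOne ℂ (R m) (R m) = c⁻¹ • (c • R - rankOne ℂ (R m) (R m)) := by
        rw [smul_sub, inv_smul_smul₀ hc]
      rw [le_def, hsub]
      exact ((le_def _ _).mp (hR.rankOne_le_smul m)).smul_of_nonneg hc₀
    · rintro _ ⟨x, rfl⟩
      exact Submodule.smul_mem _ _ (Submodule.smul_mem _ _ hWm)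
  exact hne (by simpa [c, hc] using congrArg (· m) hY)

lemma eq_mul_one_sub (hW : W.IsPositive) (hT : IsShorted W S T) (hQ : IsIdempotentElem Q)
    (hQT : LinearMap.range (Q : E →ₗ[ℂ] E) = LinearMap.ker (T : E →ₗ[ℂ] E))
    (hQW : star Q * W = W * Q) : T = W * (1 - Q) := by
  have hPW : star (1 - Q) * W = W * (1 - Q) := by simp [sub_mul, mul_sub, hQW]
  have hP := hQ.one_sub
  generalize hPdef : 1 - Q = P at hPW hP ⊢
  have hTQ : T * Q = 0 := by
    ext x
    exact (hQT ▸ LinearMap.mem_range_self (Q : E →ₗ[ℂ] E) x : Q x ∈ LinearMap.ker (T : E →ₗ[ℂ] E))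
  have hTP : T * P = T := by simp [← hPdef, mul_sub, hTQ]
  have hPT : star P * T = T := by
    simpa [hT.1.1.isSelfAdjoint.star_eq] using congrArg star hTP
  have hWP : W * P = star P * (W * P) := by rw [← mul_assoc, hPW, mul_assoc, hP.eq]
  apply le_antisymm
  · have h : W * P - T = star P * ((W - T) * P) := by
      rw [sub_mul, mul_sub, hTP, hPT, ← hWP]
    rw [le_def, h]
    exact hT.1.2.1.adjoint_conj P
  · refine hT.2 _ ⟨?_, ?_, ?_⟩
    · rw [hWP]
      exact hW.adjoint_conj P
    · have h : W - W * P = star Q * (W * Q) := by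
        rw [← mul_assoc, hQW, mul_assoc, hQ.eq]
        simp [← hPdef, mul_sub]
      rw [h]
      exact hW.adjoint_conj Q
    · rintro _ ⟨x, rfl⟩
      rw [Submodule.mem_orthogonal]
      intro s hs
      have hPs : P s = 0 := by simp [← hPdef, hT.apply_eq_self_of_mem hQ hQT hs]
      change ⟪s, (W * P) x⟫ = 0
      rw [← adjoint_inner_left, ← star_eq_adjoint, star_mul, hW.isSelfAdjoint.star_eq, hPW]
      simp [hPs]

lemma proj_apply_eq_zero_of_apply_mem_orthogonal (hWinj : Function.Injective W)
    (hT : IsShorted W S T) (hQ : IsIdempotentElem Q)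
    (hQT : LinearMap.range (Q : E →ₗ[ℂ] E) = LinearMap.ker (T : E →ₗ[ℂ] E))
    (hQW : star Q * W = W * Q) {h : E} (hWh : W h ∈ Sᗮ) : Q h = 0 := by
  have hTQh : T (Q h) = 0 := (hQT ▸ LinearMap.mem_range_self (Q : E →ₗ[ℂ] E) h :)
  have hWQh : W (Q h) = adjoint Q (W h) := congrArg (· h) hQW.symm
  refine hWinj ((hT.apply_eq_zero_of_apply_mem_orthogonal hTQh ?_).trans (map_zero W).symm)
  rw [hWQh, Submodule.mem_orthogonal]
  intro s hs
  rw [adjoint_inner_right, hT.apply_eq_self_of_mem hQ hQT hs]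
  exact Submodule.inner_right_of_mem_orthogonal hs hWh

lemma eq_mul_of_eq_mul_of_apply_eq_zero (hW : IsSelfAdjoint W) (hWinj : Function.Injective W)
    (hT : IsShorted W S T) (hQ : IsIdempotentElem Q)
    (hQT : LinearMap.range (Q : E →ₗ[ℂ] E) = LinearMap.ker (T : E →ₗ[ℂ] E))
    (hQW : star Q * W = W * Q) (hTW : T = W * (1 - Q)) {D P : E →L[ℂ] E} (hD : D = P * W)
    (hDS : ∀ s ∈ S, D s = 0) : D = P * T := by
  have hQP : Q * star P = 0 := by
    ext y
    refine hT.proj_apply_eq_zero_of_apply_mem_orthogonal hWinj hQ hQT hQW ?_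
    rw [Submodule.mem_orthogonal]
    intro s hs
    change ⟪s, (W * star P) y⟫ = 0
    rw [← adjoint_inner_left, ← star_eq_adjoint, star_mul, star_star, hW.star_eq, ← hD,
      hDS s hs, inner_zero_left]
  have hDQ : D * Q = 0 := by
    rw [hD, mul_assoc, ← hQW, ← mul_assoc, ← star_star P, ← star_mul, hQP]
    simp
  calc D = D * (1 - Q) := by rw [mul_sub, hDQ, mul_one, sub_zero]
    _ = P * T := by rw [hTW, hD, mul_assoc]

end IsShorted

variable [CompleteSpace E]

lemma minusLE_of_eq_mul {D M P : E →L[ℂ] E} (hP : IsIdempotentElem P) (hD : IsSelfAdjoint D)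
    (hM : IsSelfAdjoint M) (h : D = P * M) : MinusLE D M :=
  ⟨P, P, hP, hP, h, by rw [hD.adjoint_eq, hM.adjoint_eq]; exact h⟩

lemma MinusLE.apply_eq_zero_of_conj {D W C : E →L[ℂ] E} (h : MinusLE D (adjoint C ∘L (W ∘L C)))
    (hW : IsSelfAdjoint W) {v : E} (hv : C v = 0) : D v = 0 ∧ adjoint D v = 0 := by
  obtain ⟨P, Q, -, -, hP, hQ⟩ := h
  have hM : adjoint (adjoint C ∘L (W ∘L C)) = adjoint C ∘L (W ∘L C) :=
    (hW.conjugate' C).adjoint_eq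
  exact ⟨by simp [hP, hv], by simp [hQ, hM, hv]⟩

lemma exists_comp_sub_one_apply_eq_zero {W A B : E →L[ℂ] E} (hW : W.IsPositive)
    (hWinj : Function.Injective W)
    (hker : LinearMap.ker (B : E →ₗ[ℂ] E) = LinearMap.ker ((adjoint A ∘L W : E →L[ℂ] E) : E →ₗ[ℂ] E))
    (y : E) : ∃ X : E →L[ℂ] E, (A ∘L X ∘L B - 1) (A y) = 0 := by
  by_cases hBy : B (A y) = 0
  · have hAWAy : A y ∈ LinearMap.ker ((adjoint A ∘L W : E →L[ℂ] E) : E →ₗ[ℂ] E) :=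
      hker ▸ LinearMap.mem_ker.mpr hBy
    have hAy : A y = 0 := by
      refine hWinj ((hW.apply_eq_zero_of_inner_self_eq_zero ?_).trans (map_zero W).symm)
      have h₀ : adjoint A (W (A y)) = 0 := LinearMap.mem_ker.mp hAWAy
      rw [← adjoint_inner_left, h₀, inner_zero_left]
    exact ⟨0, by simp [hAy]⟩
  · obtain ⟨X, hX⟩ := exists_apply_eq_of_ne_zero hBy y
    exact ⟨X, by simp [hX]⟩

namespace IsShorted

variable {W A B T Q : E →L[ℂ] E}

lemma minusLE_adjoint_conj_sub_one (hW : IsSelfAdjoint W)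
    (hker : LinearMap.ker (B : E →ₗ[ℂ] E) = LinearMap.ker ((adjoint A ∘L W : E →L[ℂ] E) : E →ₗ[ℂ] E))
    (hT : IsShorted W (LinearMap.range (A : E →ₗ[ℂ] E)) T) (hQ : IsIdempotentElem Q)
    (hQW : star Q * W = W * Q) (hTW : T = W * (1 - Q)) (X : E →L[ℂ] E) :
    MinusLE T (adjoint (A ∘L X ∘L B - 1) ∘L (W ∘L (A ∘L X ∘L B - 1))) := by
  have hTA : T * A = 0 := by
    ext y
    exact hT.apply_eq_zero_of_mem (LinearMap.mem_range_self _ y)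
  have hBP : B * (1 - Q) = 0 := by
    ext x
    have hTx : T x ∈ LinearMap.ker (adjoint A : E →ₗ[ℂ] E) :=
      orthogonal_range A ▸ hT.1.2.2 (LinearMap.mem_range_self _ x)
    rw [hTW] at hTx
    exact LinearMap.mem_ker.mp (hker ▸ hTx : (1 - Q) x ∈ LinearMap.ker (B : E →ₗ[ℂ] E))
  refine minusLE_of_eq_mul hQ.one_sub.star hT.1.1.isSelfAdjoint (hW.conjugate' _) ?_
  rw [hTW]
  exact (star_mul_conj_sub_one_eq (by simp [sub_mul, mul_sub, hQW]) (hTW ▸ hTA) hBP).symm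

lemma minusLE_of_forall_minusLE (hW : W.IsPositive) (hWinj : Function.Injective W)
    (hker : LinearMap.ker (B : E →ₗ[ℂ] E) = LinearMap.ker ((adjoint A ∘L W : E →L[ℂ] E) : E →ₗ[ℂ] E))
    (hT : IsShorted W (LinearMap.range (A : E →ₗ[ℂ] E)) T) (hQ : IsIdempotentElem Q)
    (hQT : LinearMap.range (Q : E →ₗ[ℂ] E) = LinearMap.ker (T : E →ₗ[ℂ] E))
    (hQW : star Q * W = W * Q) (hTW : T = W * (1 - Q)) {D : E →L[ℂ] E}
    (hD : ∀ X : E →L[ℂ] E, MinusLE D (adjoint (A ∘L X ∘L B - 1) ∘L (W ∘L (A ∘L X ∘L B - 1)))) :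
    MinusLE D T := by
  have hDA (s : E) (hs : s ∈ LinearMap.range (A : E →ₗ[ℂ] E)) : D s = 0 ∧ adjoint D s = 0 := by
    obtain ⟨y, rfl⟩ := hs
    obtain ⟨X, hX⟩ := exists_comp_sub_one_apply_eq_zero hW hWinj hker y
    exact (hD X).apply_eq_zero_of_conj hW.isSelfAdjoint hX
  obtain ⟨P, P', hP, hP', hDP, hDP'⟩ : MinusLE D W := by simpa [one_def, adjoint_id] using hD 0
  rw [hW.isSelfAdjoint.adjoint_eq] at hDP'
  refine ⟨P, P', hP, hP', ?_, ?_⟩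
  · exact hT.eq_mul_of_eq_mul_of_apply_eq_zero hW.isSelfAdjoint hWinj hQ hQT hQW hTW hDP
      fun s hs => (hDA s hs).1
  · rw [hT.1.1.isSelfAdjoint.adjoint_eq]
    exact hT.eq_mul_of_eq_mul_of_apply_eq_zero hW.isSelfAdjoint hWinj hQ hQT hQW hTW hDP'
      fun s hs => (hDA s hs).2

end IsShorted

end

theorem stmt9_general (W A B T : H →L[ℂ] H) (hW : W.IsPositive) (hWinj : Function.Injective W)
    (hker : LinearMap.ker (B : H →ₗ[ℂ] H) = LinearMap.ker ((adjoint A ∘L W : H →L[ℂ] H) : H →ₗ[ℂ] H))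
    (hT : IsShorted W (LinearMap.range (A : H →ₗ[ℂ] H)) T)
    (hcomp : Compatible W (LinearMap.ker (T : H →ₗ[ℂ] H))) :
    (∀ X : H →L[ℂ] H,
        MinusLE T (adjoint (A ∘L X ∘L B - 1) ∘L (W ∘L (A ∘L X ∘L B - 1)))) ∧
      ∀ D : H →L[ℂ] H,
        (∀ X : H →L[ℂ] H,
          MinusLE D (adjoint (A ∘L X ∘L B - 1) ∘L (W ∘L (A ∘L X ∘L B - 1)))) →
        MinusLE D T := by
  obtain ⟨Q, hQ, hQT, hWQ⟩ := hcomp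
  have hQW := star_mul_eq_mul_of_isSelfAdjoint hW.isSelfAdjoint hWQ
  have hTW := hT.eq_mul_one_sub hW hQ hQT hQW
  exact ⟨hT.minusLE_adjoint_conj_sub_one hW.isSelfAdjoint hker hQ hQW hTW,
    fun D hD => hT.minusLE_of_forall_minusLE hW hWinj hker hQ hQT hQW hTW hD⟩

/-- if `W` is injective and `(W, ker T)` is compatible, then `T` is the
minus-order infimum of `{(AXB - I)* W (AXB - I)}`. -/
theorem stmt9 (W A B T : H →L[ℂ] H) (hW : W.IsPositive) (hWinj : Function.Injective W)
    (hA : IsClosed (LinearMap.range (A : H →ₗ[ℂ] H) : Set H)) (hB : IsClosed (LinearMap.range (B : H →ₗ[ℂ] H) : Set H))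
    (hker : LinearMap.ker (B : H →ₗ[ℂ] H) = LinearMap.ker ((adjoint A ∘L W : H →L[ℂ] H) : H →ₗ[ℂ] H))
    (hT : IsShorted W (LinearMap.range (A : H →ₗ[ℂ] H)) T)
    (hcomp : Compatible W (LinearMap.ker (T : H →ₗ[ℂ] H))) :
    (∀ X : H →L[ℂ] H,
        MinusLE T (adjoint (A ∘L X ∘L B - 1) ∘L (W ∘L (A ∘L X ∘L B - 1)))) ∧
      ∀ D : H →L[ℂ] H,
        (∀ X : H →L[ℂ] H,
          MinusLE D (adjoint (A ∘L X ∘L B - 1) ∘L (W ∘L (A ∘L X ∘L B - 1)))) →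
        MinusLE D T :=
  stmt9_general W A B T hW hWinj hker hT hcomp
end
end

section
/- Let W ∈ L(H) be a positive operator, A ∈ L(H) an operator with closed range and B ∈ L(H), such that ker W ∩ range A = {0}, ker W ∩ closure(range A*) = {0}, and the pairs (W, range A) and (W, closure(range A*)) are compatible. Then A *_W≤ B if and only if AWA* = BWA* and A*WA = A*WB. -/
/-! As `W` is selfadjoint, the two equations say `range (B - A) ⊆ ker (A* W)` and
`range (B* - A*) ⊆ ker (A W)`, the third condition of the two one-sided orders. Conversely,
let `Q` be an idempotent onto `range A` with `W Q` selfadjoint, and `y = (B - A) x`. Then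
`W y ⊥ range A`, so `⟪W Q y, Q y⟫ = ⟪Q* W y, Q y⟫ = ⟪W y, Q y⟫ = 0`; positivity of `W`
forces `W Q y = 0`, hence `Q y ∈ ker W ∩ range A = {0}`. Thus `Q B = A`, which separates
`range A` from `range (B - A)`. The same argument for `A*` (with `closure (range A*)`) gives
`Q' B* = A*`, i.e. `A = B Q'*`, so `range A ⊆ range B`, and symmetrically for the adjoints.
-/

open ContinuousLinearMap
open scoped ComplexInnerProductSpace

noncomputable section

variable {H : Type*} [NormedAddCommGroup H] [InnerProductSpace ℂ H] [CompleteSpace H]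

theorem LinearMap.range_eq_sup_range_sub {R M M₂ : Type*} [Ring R] [AddCommGroup M]
    [AddCommGroup M₂] [Module R M] [Module R M₂] {f g : M →ₗ[R] M₂}
    (h : LinearMap.range f ≤ LinearMap.range g) :
    LinearMap.range g = LinearMap.range f ⊔ LinearMap.range (g - f) := by
  refine le_antisymm ?_ (sup_le h ?_)
  · rintro _ ⟨x, rfl⟩
    exact Submodule.mem_sup.2 ⟨f x, ⟨x, rfl⟩, (g - f) x, ⟨x, rfl⟩, by simp⟩
  · rintro _ ⟨x, rfl⟩
    exact Submodule.sub_mem _ ⟨x, rfl⟩ (h ⟨x, rfl⟩)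

theorem LinearMap.range_inf_range_eq_bot_of_comp_eq {R M M₂ : Type*} [Semiring R]
    [AddCommMonoid M] [AddCommMonoid M₂] [Module R M] [Module R M₂] {f g : M →ₗ[R] M₂}
    {q : M₂ →ₗ[R] M₂} (hqf : q ∘ₗ f = f) (hqg : q ∘ₗ g = 0) :
    LinearMap.range f ⊓ LinearMap.range g = ⊥ := by
  refine eq_bot_iff.2 fun v ⟨⟨y, hy⟩, x, hx⟩ => ?_
  subst hy
  rw [Submodule.mem_bot, ← LinearMap.congr_fun hqf y, LinearMap.comp_apply, ← hx]
  exact LinearMap.congr_fun hqg x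

theorem ContinuousLinearMap.IsPositive.apply_eq_zero_of_inner_self {W : H →L[ℂ] H}
    (hW : W.IsPositive) {x : H} (h : ⟪W x, x⟫ = 0) : W x = 0 := by
  obtain ⟨S, rfl⟩ :=
    CStarAlgebra.nonneg_iff_eq_star_mul_self.mp ((nonneg_iff_isPositive W).2 hW)
  have hSx : S x = 0 := by
    rwa [star_eq_adjoint, mul_apply_eq_comp, adjoint_inner_left, inner_self_eq_zero] at h
  simp [hSx]

section WeightedStarOrder

variable {W A B Q : H →L[ℂ] H}

theorem IsIdempotentElem.apply_eq_zero_of_isSelfAdjoint_comp (hW : W.IsPositive)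
    (hQ : IsIdempotentElem Q) (hWQ : IsSelfAdjoint (W ∘L Q))
    (hker : LinearMap.ker (W : H →ₗ[ℂ] H) ⊓ LinearMap.range (Q : H →ₗ[ℂ] H) = ⊥)
    {y : H} (hy : W y ∈ (LinearMap.range (Q : H →ₗ[ℂ] H))ᗮ) : Q y = 0 := by
  have hQy : Q y ∈ LinearMap.range (Q : H →ₗ[ℂ] H) := ⟨y, rfl⟩
  have hWQy : W (Q y) = adjoint Q (W y) := by
    rw [← comp_apply, ← hWQ.adjoint_eq, adjoint_comp, hW.isSelfAdjoint.adjoint_eq, comp_apply]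
  have hinner : ⟪W (Q y), Q y⟫ = 0 := by
    rw [hWQy, adjoint_inner_left, ← mul_apply_eq_comp, hQ.eq]
    exact Submodule.inner_left_of_mem_orthogonal hQy hy
  have hker_mem :
      Q y ∈ LinearMap.ker (W : H →ₗ[ℂ] H) ⊓ LinearMap.range (Q : H →ₗ[ℂ] H) :=
    ⟨hW.apply_eq_zero_of_inner_self hinner, hQy⟩
  rwa [hker] at hker_mem

theorem range_sub_le_ker_adjoint_comp_iff :
    LinearMap.range ((B - A : H →L[ℂ] H) : H →ₗ[ℂ] H) ≤
        LinearMap.ker ((adjoint A ∘L W : H →L[ℂ] H) : H →ₗ[ℂ] H) ↔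
      adjoint A ∘L (W ∘L A) = adjoint A ∘L (W ∘L B) := by
  rw [LinearMap.range_le_ker_iff, ← toLinearMap_comp, ← toLinearMap_zero, coe_inj, comp_assoc,
    comp_sub, comp_sub, sub_eq_zero, eq_comm]

theorem comp_comp_adjoint_eq_iff (hW : IsSelfAdjoint W) :
    A ∘L (W ∘L adjoint A) = B ∘L (W ∘L adjoint A) ↔
      A ∘L (W ∘L adjoint A) = A ∘L (W ∘L adjoint B) := by
  rw [← (adjoint : (H →L[ℂ] H) ≃ₗᵢ⋆[ℂ] (H →L[ℂ] H)).injective.eq_iff]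
  simp only [adjoint_comp, adjoint_adjoint, hW.adjoint_eq, comp_assoc]

theorem LStarW.adjoint_comp_eq (h : LStarW W A B) :
    adjoint A ∘L (W ∘L A) = adjoint A ∘L (W ∘L B) :=
  range_sub_le_ker_adjoint_comp_iff.1 h.2.2

theorem rStarW_iff_lStarW_adjoint : RStarW W A B ↔ LStarW W (adjoint A) (adjoint B) := by
  rw [RStarW, LStarW, adjoint_adjoint]

theorem exists_comp_eq_of_compatible (hW : W.IsPositive) {N : Submodule ℂ H}
    (hc : Compatible W N) (hN : LinearMap.ker (W : H →ₗ[ℂ] H) ⊓ N = ⊥)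
    (hAN : LinearMap.range (A : H →ₗ[ℂ] H) ≤ N)
    (hNA : N ≤ (LinearMap.range (A : H →ₗ[ℂ] H)).topologicalClosure)
    (hAB : adjoint A ∘L (W ∘L A) = adjoint A ∘L (W ∘L B)) :
    ∃ Q : H →L[ℂ] H, Q ∘L A = A ∧ Q ∘L B = A := by
  obtain ⟨Q, hQ, rfl, hWQ⟩ := hc
  have hQBA : Q ∘L (B - A) = 0 := by
    ext x
    refine hQ.apply_eq_zero_of_isSelfAdjoint_comp hW hWQ hN (Submodule.orthogonal_le hNA ?_)
    rw [Submodule.orthogonal_closure]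
    exact (orthogonal_range A).ge (range_sub_le_ker_adjoint_comp_iff.2 hAB ⟨x, rfl⟩)
  have hQA : Q ∘L A = A :=
    ext fun x => (LinearMap.IsIdempotentElem.mem_range_iff hQ.toLinearMap).1 (hAN ⟨x, rfl⟩)
  refine ⟨Q, hQA, ?_⟩
  calc Q ∘L B = Q ∘L A := by rwa [← sub_eq_zero, ← comp_sub]
    _ = A := hQA

theorem lStarW_of_comp_eq {Q' : H →L[ℂ] H}
    (hAB : adjoint A ∘L (W ∘L A) = adjoint A ∘L (W ∘L B))
    (hQA : Q ∘L A = A) (hQB : Q ∘L B = A) (hQ'B : Q' ∘L adjoint B = adjoint A) :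
    LStarW W A B := by
  have hA : A = B ∘L adjoint Q' := by
    rw [← adjoint_adjoint A, ← hQ'B, adjoint_comp, adjoint_adjoint]
  refine ⟨LinearMap.range_eq_sup_range_sub ?_, LinearMap.range_inf_range_eq_bot_of_comp_eq
    (q := Q) ?_ ?_, range_sub_le_ker_adjoint_comp_iff.2 hAB⟩
  · rw [hA, toLinearMap_comp]
    exact LinearMap.range_comp_le_range _ _
  · rw [← toLinearMap_comp, hQA]
  · rw [← toLinearMap_comp, comp_sub, hQB, hQA, sub_self, toLinearMap_zero]

end WeightedStarOrder

theorem stmt15_general (W A B : H →L[ℂ] H) (hW : W.IsPositive)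
    (h1 : LinearMap.ker (W : H →ₗ[ℂ] H) ⊓ LinearMap.range (A : H →ₗ[ℂ] H) = ⊥)
    (h2 : LinearMap.ker (W : H →ₗ[ℂ] H) ⊓ (LinearMap.range ((adjoint A : H →L[ℂ] H) : H →ₗ[ℂ] H)).topologicalClosure = ⊥)
    (h3 : Compatible W (LinearMap.range (A : H →ₗ[ℂ] H)))
    (h4 : Compatible W (LinearMap.range ((adjoint A : H →L[ℂ] H) : H →ₗ[ℂ] H)).topologicalClosure) :
    StarW W A B ↔
      A ∘L (W ∘L adjoint A) = B ∘L (W ∘L adjoint A) ∧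
        adjoint A ∘L (W ∘L A) = adjoint A ∘L (W ∘L B) := by
  rw [comp_comp_adjoint_eq_iff hW.isSelfAdjoint]
  constructor
  · rintro ⟨hL, hR⟩
    exact ⟨by simpa using (rStarW_iff_lStarW_adjoint.1 hR).adjoint_comp_eq, hL.adjoint_comp_eq⟩
  · rintro ⟨hR, hL⟩
    replace hR : adjoint (adjoint A) ∘L (W ∘L adjoint A) =
        adjoint (adjoint A) ∘L (W ∘L adjoint B) := by
      rwa [adjoint_adjoint]
    obtain ⟨Q, hQA, hQB⟩ :=
      exists_comp_eq_of_compatible hW h3 h1 le_rfl (Submodule.le_topologicalClosure _) hL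
    obtain ⟨Q', hQ'A, hQ'B⟩ :=
      exists_comp_eq_of_compatible hW h4 h2 (Submodule.le_topologicalClosure _) le_rfl hR
    refine ⟨lStarW_of_comp_eq hL hQA hQB hQ'B, rStarW_iff_lStarW_adjoint.2 ?_⟩
    exact lStarW_of_comp_eq hR hQ'A hQ'B (by rwa [adjoint_adjoint, adjoint_adjoint])

/-- under the compatibility and trivial-intersection hypotheses,
`A *_W≤ B` iff `AWA* = BWA*` and `A*WA = A*WB`. -/
theorem stmt15 (W A B : H →L[ℂ] H) (hW : W.IsPositive)
    (hA : IsClosed (LinearMap.range (A : H →ₗ[ℂ] H) : Set H))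
    (h1 : LinearMap.ker (W : H →ₗ[ℂ] H) ⊓ LinearMap.range (A : H →ₗ[ℂ] H) = ⊥)
    (h2 : LinearMap.ker (W : H →ₗ[ℂ] H) ⊓ (LinearMap.range ((adjoint A : H →L[ℂ] H) : H →ₗ[ℂ] H)).topologicalClosure = ⊥)
    (h3 : Compatible W (LinearMap.range (A : H →ₗ[ℂ] H)))
    (h4 : Compatible W (LinearMap.range ((adjoint A : H →L[ℂ] H) : H →ₗ[ℂ] H)).topologicalClosure) :
    StarW W A B ↔
      A ∘L (W ∘L adjoint A) = B ∘L (W ∘L adjoint A) ∧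
        adjoint A ∘L (W ∘L A) = adjoint A ∘L (W ∘L B) :=
  stmt15_general W A B hW h1 h2 h3 h4
end
end
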